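/- arXiv:0803.2160 — 2 statements merged into one kernel-verified Lean document; each statement's English description precedes it below -/
import Mathlib

section
/- Fix ρ ∈ E, N = N_ρ, α_p = v_p(N), and let p be a prime and 0 ≤ γ ≤ α_p. Then ben(N/p^γ) = ρ γ log p + ℓ(p^{α_p−γ}) − ℓ(p^{α_p}) is nondecreasing for 0 ≤ γ ≤ α_p. -/
/-- ℓ(M): the sum of the prime powers in the standard factorization of M. -/
def ell (M : ℕ) : ℕ := ∑ p ∈ M.primeFactors, p ^ M.factorization p

/-- The benefit of M with respect to the superchampion N associated to ρ. -/
noncomputable def ben (ρ : ℝ) (N M : ℕ) : ℝ :=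
  (ell M : ℝ) - (ell N : ℝ) - ρ * (Real.log M - Real.log N)

/-!
Write `N = p ^ α * m` with `p ∤ m`. Since `ℓ` is additive on coprime factors, removing `p ^ γ`
from `N` changes `ℓ` by `ℓ(p ^ (α - γ)) - ℓ(p ^ α)` and `log` by `-γ log p`, which gives the
formula. Its increment from `γ` to `γ + 1` is `ρ log p - (ℓ(p ^ k) - ℓ(p ^ (k - 1)))` with
`k = α - γ`. The increments `k ↦ ℓ(p ^ k) - ℓ(p ^ (k - 1))` (namely `p`, then `p ^ (k - 1) (p - 1)`)
are nondecreasing, so the largest one is at `k = α`, and it is at most `ρ log p` because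
`ben (N / p) ≥ 0`.
-/

open Real

lemma ell_mul_of_coprime {a b : ℕ} (hab : a.Coprime b) : ell (a * b) = ell a + ell b := by
  rw [ell, hab.primeFactors_mul, Finset.sum_union hab.disjoint_primeFactors,
    Nat.factorization_mul_of_coprime hab]
  congr 1 <;> refine Finset.sum_congr rfl fun q hq => ?_
  · have : b.factorization q = 0 :=
      Finsupp.notMem_support_iff.1 (Finset.disjoint_left.1 hab.disjoint_primeFactors hq)
    rw [Finsupp.add_apply, this, add_zero]
  · have : a.factorization q = 0 :=
      Finsupp.notMem_support_iff.1 (Finset.disjoint_right.1 hab.disjoint_primeFactors hq)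
    rw [Finsupp.add_apply, this, zero_add]

lemma ell_prime_pow {p k : ℕ} (hp : p.Prime) (hk : k ≠ 0) : ell (p ^ k) = p ^ k := by
  simp [ell, Nat.primeFactors_prime_pow hk hp, hp.factorization_pow]

lemma monotone_ell_prime_pow_succ_sub {p : ℕ} (hp : p.Prime) :
    Monotone fun k => (ell (p ^ (k + 1)) : ℝ) - ell (p ^ k) := by
  have hp2 : (2 : ℝ) ≤ p := by exact_mod_cast hp.two_le
  refine monotone_nat_of_le_succ fun k => ?_
  show _ ≤ (ell (p ^ (k + 1 + 1)) : ℝ) - ell (p ^ (k + 1))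
  rw [ell_prime_pow hp (k + 1).add_one_ne_zero, ell_prime_pow hp k.add_one_ne_zero]
  rcases eq_or_ne k 0 with rfl | hk
  · simp [ell]
    nlinarith
  · rw [ell_prime_pow hp hk]
    push_cast
    have hsecond_diff : (p : ℝ) ^ (k + 1 + 1) - p ^ (k + 1) - (p ^ (k + 1) - p ^ k) =
        p ^ k * (p - 1) ^ 2 := by
      ring
    have : 0 ≤ (p : ℝ) ^ k * (p - 1) ^ 2 := by positivity
    linarith

lemma log_natCast_div_of_dvd {n d : ℕ} (hn : n ≠ 0) (hd : d ∣ n) :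
    log ((n / d : ℕ) : ℝ) = log n - log d := by
  have hd0 : (d : ℝ) ≠ 0 := by exact_mod_cast ne_zero_of_dvd_ne_zero hn hd
  rw [Nat.cast_div hd hd0, log_div (by exact_mod_cast hn) hd0]

lemma ell_div_prime_pow {N p γ : ℕ} (hp : p.Prime) (hN : N ≠ 0) (hγ : γ ≤ N.factorization p) :
    (ell (N / p ^ γ) : ℝ) - ell N =
      ell (p ^ (N.factorization p - γ)) - ell (p ^ N.factorization p) := by
  have hsplit k : ell (p ^ k * ordCompl[p] N) = ell (p ^ k) + ell (ordCompl[p] N) :=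
    ell_mul_of_coprime ((Nat.coprime_ordCompl hp hN).pow_left k)
  have hN_eq : p ^ N.factorization p * ordCompl[p] N = N := Nat.ordProj_mul_ordCompl_eq_self N p
  have hdiv : N / p ^ γ = p ^ (N.factorization p - γ) * ordCompl[p] N := by
    refine Nat.div_eq_of_eq_mul_left (pow_pos hp.pos γ) ?_
    rw [mul_right_comm, ← pow_add, Nat.sub_add_cancel hγ, hN_eq]
  have hellN : ell N = ell (p ^ N.factorization p) + ell (ordCompl[p] N) := by
    rw [← hsplit, hN_eq]
  rw [hdiv, hsplit, hellN]
  push_cast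
  ring

lemma ben_div_prime_pow (ρ : ℝ) {N p γ : ℕ} (hp : p.Prime) (hN : N ≠ 0)
    (hγ : γ ≤ N.factorization p) :
    ben ρ N (N / p ^ γ) =
      ρ * γ * log p + ell (p ^ (N.factorization p - γ)) - ell (p ^ N.factorization p) := by
  have hdvd : p ^ γ ∣ N := (Nat.pow_dvd_pow p hγ).trans (Nat.ordProj_dvd N p)
  have hell := ell_div_prime_pow hp hN hγ
  rw [ben, log_natCast_div_of_dvd hN hdvd, Nat.cast_pow, log_pow]
  linarith

lemma ben_nonneg {ρ : ℝ} {N : ℕ}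
    (hsc : ∀ M : ℕ, 0 < M → (ell N : ℝ) - ρ * log N ≤ (ell M : ℝ) - ρ * log M)
    {M : ℕ} (hM : 0 < M) : 0 ≤ ben ρ N M := by
  have := hsc M hM
  rw [ben]
  linarith

lemma ell_prime_pow_sub_le_mul_log {ρ : ℝ} {N p : ℕ}
    (hsc : ∀ M : ℕ, 0 < M → (ell N : ℝ) - ρ * log N ≤ (ell M : ℝ) - ρ * log M)
    (hp : p.Prime) (hα : N.factorization p ≠ 0) :
    (ell (p ^ N.factorization p) : ℝ) - ell (p ^ (N.factorization p - 1)) ≤ ρ * log p := by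
  have hN : N ≠ 0 := by rintro rfl; simp at hα
  have hpos : 0 < N / p :=
    Nat.div_pos (Nat.le_of_dvd (Nat.pos_of_ne_zero hN) (Nat.dvd_of_factorization_pos hα)) hp.pos
  have hben := ben_nonneg hsc hpos
  rw [← pow_one p, ben_div_prime_pow ρ hp hN (Nat.one_le_iff_ne_zero.2 hα)] at hben
  push_cast at hben
  linarith

lemma ben_div_prime_pow_le_succ {ρ : ℝ} {N p j : ℕ}
    (hsc : ∀ M : ℕ, 0 < M → (ell N : ℝ) - ρ * log N ≤ (ell M : ℝ) - ρ * log M)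
    (hp : p.Prime) (hj : j + 1 ≤ N.factorization p) :
    ben ρ N (N / p ^ j) ≤ ben ρ N (N / p ^ (j + 1)) := by
  set α := N.factorization p
  have hN : N ≠ 0 := by rintro rfl; simp [α] at hj
  have htop := ell_prime_pow_sub_le_mul_log hsc hp (by omega : α ≠ 0)
  have hincr := monotone_ell_prime_pow_succ_sub hp (show α - (j + 1) ≤ α - 1 by omega)
  simp only [show α - (j + 1) + 1 = α - j by omega, show α - 1 + 1 = α by omega] at hincr
  rw [ben_div_prime_pow ρ hp hN (by omega), ben_div_prime_pow ρ hp hN hj]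
  push_cast
  linarith

theorem ben_div_pow_monotone_general (ρ : ℝ) (N : ℕ)
    (hsc : ∀ M : ℕ, 0 < M →
      (ell N : ℝ) - ρ * Real.log N ≤ (ell M : ℝ) - ρ * Real.log M)
    (p : ℕ) :
    (∀ γ : ℕ, γ ≤ N.factorization p →
      ben ρ N (N / p ^ γ) =
        ρ * (γ : ℝ) * Real.log p
          + (ell (p ^ (N.factorization p - γ)) : ℝ)
          - (ell (p ^ N.factorization p) : ℝ)) ∧
    (∀ γ γ' : ℕ, γ ≤ γ' → γ' ≤ N.factorization p →
      ben ρ N (N / p ^ γ) ≤ ben ρ N (N / p ^ γ')) := by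
  obtain hα | hα := eq_or_ne (N.factorization p) 0
  · refine ⟨fun γ hγ => ?_, fun γ γ' hγγ' hγ' => ?_⟩ <;>
      obtain rfl : γ = 0 := by omega
    · simp [ben, hα]
    · obtain rfl : γ' = 0 := by omega
      rfl
  have hp : p.Prime := Nat.prime_of_mem_primeFactors (Finsupp.mem_support_iff.2 hα)
  have hN : N ≠ 0 := by rintro rfl; simp at hα
  have hmono : MonotoneOn (fun γ => ben ρ N (N / p ^ γ)) (Set.Iic (N.factorization p)) :=
    monotoneOn_of_le_add_one Set.ordConnected_Iic fun j _ _ hj =>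
      ben_div_prime_pow_le_succ hsc hp hj
  exact ⟨fun γ => ben_div_prime_pow ρ hp hN,
    fun γ γ' hγγ' hγ' => hmono (hγγ'.trans hγ') hγ' hγγ'⟩

theorem ben_div_pow_monotone (ρ : ℝ) (N : ℕ) (hN : 0 < N)
    (hsc : ∀ M : ℕ, 0 < M →
      (ell N : ℝ) - ρ * Real.log N ≤ (ell M : ℝ) - ρ * Real.log M)
    (p : ℕ) (hp : p.Prime) :
    (∀ γ : ℕ, γ ≤ N.factorization p →
      ben ρ N (N / p ^ γ) =
        ρ * (γ : ℝ) * Real.log p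
          + (ell (p ^ (N.factorization p - γ)) : ℝ)
          - (ell (p ^ N.factorization p) : ℝ)) ∧
    (∀ γ γ' : ℕ, γ ≤ γ' → γ' ≤ N.factorization p →
      ben ρ N (N / p ^ γ) ≤ ben ρ N (N / p ^ γ')) :=
  ben_div_pow_monotone_general ρ N hsc p
end

section
/- With the same setup (ρ ≥ 5/log 5, N = N_ρ, B₁ = min(x₂²−2x₂, x₁/2 − √x₁)): if M is a positive integer with ben(M) < B₁ and p is a prime with x₂ ≤ p < √x₁, then v_p(M) ≤ 2. -/
/-! If p is a prime with x₂ ≤ p and v_p(M) ≥ 3, the prime p alone contributes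
ben_p(M) ≥ (p³ − 3ρ log p) − p ≥ p(p − 1)(p − 2) ≥ x₂² − 2x₂ to the benefit, because
ρ log p ≤ p² − p there (so v_p(N) ≤ 1 and p^v − ρ v log p increases for v ≥ 1), and every
local benefit is nonnegative since v_p(N) minimises p^v − ρ v log p. -/

open Real

/-- The contribution `p^v − ρ v log p` of the prime power `p^v` to `ℓ(M) − ρ log M`;
the term `p^0` is not a summand of `ℓ`, hence the value `0` at `v = 0`. -/
noncomputable def localCost (ρ : ℝ) (p v : ℕ) : ℝ :=
  (if v = 0 then 0 else (p : ℝ) ^ v) - ρ * v * log p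

@[simp]
lemma localCost_zero (ρ : ℝ) (p : ℕ) : localCost ρ p 0 = 0 := by
  simp [localCost]

lemma ell_sub_mul_log_eq_sum_localCost (ρ : ℝ) (K : ℕ) :
    (ell K : ℝ) - ρ * log K = K.factorization.sum (localCost ρ) := by
  have hell : (ell K : ℝ) = ∑ p ∈ K.factorization.support,
      (if K.factorization p = 0 then 0 else (p : ℝ) ^ K.factorization p) := by
    rw [ell, Nat.support_factorization]
    push_cast
    refine Finset.sum_congr rfl fun p hp => ?_
    rw [if_neg (Finsupp.mem_support_iff.mp (Nat.support_factorization K ▸ hp))]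
  rw [hell, log_nat_eq_sum_factorization, Finsupp.sum, Finsupp.sum, Finset.mul_sum,
    ← Finset.sum_sub_distrib]
  refine Finset.sum_congr rfl fun p _ => ?_
  simp only [localCost]
  ring

lemma ben_eq_sum_sub_sum (ρ : ℝ) (N M : ℕ) :
    ben ρ N M = M.factorization.sum (localCost ρ) - N.factorization.sum (localCost ρ) := by
  rw [← ell_sub_mul_log_eq_sum_localCost, ← ell_sub_mul_log_eq_sum_localCost, ben]
  ring

lemma localCost_sub_le_ben {ρ : ℝ} {N : ℕ}
    (hmin : ∀ p : ℕ, p.Prime → ∀ v, localCost ρ p (N.factorization p) ≤ localCost ρ p v)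
    (M : ℕ) {q : ℕ} (hq : q.Prime) :
    localCost ρ q (M.factorization q) - localCost ρ q (N.factorization q) ≤ ben ρ N M := by
  set S := insert q (M.primeFactors ∪ N.primeFactors)
  have hMS : M.factorization.support ⊆ S := by
    rw [Nat.support_factorization]
    exact Finset.subset_union_left.trans (Finset.subset_insert _ _)
  have hNS : N.factorization.support ⊆ S := by
    rw [Nat.support_factorization]
    exact Finset.subset_union_right.trans (Finset.subset_insert _ _)
  have hprime : ∀ p ∈ S, p.Prime := by
    simp only [S, Finset.mem_insert, Finset.mem_union]
    rintro p (rfl | hp | hp)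
    exacts [hq, Nat.prime_of_mem_primeFactors hp, Nat.prime_of_mem_primeFactors hp]
  rw [ben_eq_sum_sub_sum, Finsupp.sum_of_support_subset _ hMS _ (fun _ _ => localCost_zero _ _),
    Finsupp.sum_of_support_subset _ hNS _ (fun _ _ => localCost_zero _ _),
    ← Finset.sum_sub_distrib]
  exact Finset.single_le_sum (fun p hp => sub_nonneg.mpr (hmin p (hprime p hp) _))
    (Finset.mem_insert_self q _)

lemma le_of_succ_lt_iff_lt {α : Type*} [LinearOrder α] {f : ℕ → α} {k : ℕ}
    (hf : ∀ i, f (i + 1) < f i ↔ i < k) (v : ℕ) : f k ≤ f v := by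
  rcases le_total k v with hkv | hvk
  · refine monotoneOn_nat_Ici_of_le_succ (fun n hn => ?_) Set.self_mem_Ici hkv hkv
    exact not_lt.mp fun h => absurd ((hf n).mp h) (not_lt.mpr hn)
  · induction hvk using Nat.decreasingInduction with
    | self => exact le_rfl
    | of_succ m hm ih => exact ih.trans ((hf m).mpr hm).le

lemma localCost_le_of_factorization_iff {ρ : ℝ} {p k : ℕ} (hp : p.Prime)
    (h₁ : 1 ≤ k ↔ (p : ℝ) / log p < ρ)
    (h₂ : ∀ i : ℕ, 2 ≤ i → (i ≤ k ↔ ((p : ℝ) ^ i - (p : ℝ) ^ (i - 1)) / log p < ρ))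
    (v : ℕ) : localCost ρ p k ≤ localCost ρ p v := by
  have hlog : 0 < log p := log_pos (by exact_mod_cast hp.one_lt)
  refine le_of_succ_lt_iff_lt (fun i => ?_) v
  rcases Nat.eq_zero_or_pos i with rfl | hi
  · rw [zero_lt_iff, ← Nat.one_le_iff_ne_zero, h₁, div_lt_iff₀ hlog]
    simp [localCost]
  · rw [← Nat.succ_le_iff, h₂ (i + 1) (by omega), div_lt_iff₀ hlog, Nat.add_sub_cancel]
    simp only [localCost, if_neg (Nat.succ_ne_zero i), if_neg hi.ne']
    push_cast
    constructor <;> intro h <;> linarith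

lemma localCost_le_localCost_succ {ρ : ℝ} {p w : ℕ} (hp : 1 ≤ p)
    (hρ : ρ * log p ≤ (p : ℝ) ^ 2 - p) (hw : 1 ≤ w) :
    localCost ρ p w ≤ localCost ρ p (w + 1) := by
  have hpw : (p : ℝ) ≤ (p : ℝ) ^ w := by
    exact_mod_cast Nat.le_self_pow (Nat.one_le_iff_ne_zero.mp hw) p
  have hp1 : (1 : ℝ) ≤ p := by exact_mod_cast hp
  simp only [localCost, if_neg (Nat.succ_ne_zero w), if_neg (Nat.one_le_iff_ne_zero.mp hw)]
  push_cast
  nlinarith [pow_succ (p : ℝ) w, mul_le_mul_of_nonneg_right hpw (by linarith : (0 : ℝ) ≤ p - 1)]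

lemma localCost_le_self {ρ : ℝ} (hρ : 0 ≤ ρ) (p : ℕ) {k : ℕ} (hk : k ≤ 1) :
    localCost ρ p k ≤ p := by
  have hlog : 0 ≤ ρ * log p := mul_nonneg hρ (log_natCast_nonneg p)
  interval_cases k <;> simp [localCost]; linarith

lemma sq_sub_self_div_log_le {a b : ℝ} (ha : 1 < a) (hab : a ≤ b) :
    (a ^ 2 - a) / log a ≤ (b ^ 2 - b) / log b := by
  have ha0 : 0 < a := by linarith
  have hloga : 0 < log a := log_pos ha
  rw [div_le_div_iff₀ hloga (log_pos (by linarith))]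
  have hlogb : log b ≤ log a + (b - a) / a := by
    have := log_le_sub_one_of_pos (div_pos (by linarith : 0 < b) ha0)
    rw [log_div (by linarith) ha0.ne'] at this
    linarith [show b / a - 1 = (b - a) / a by field_simp]
  have hloga' : (a - 1) / a ≤ log a := by
    have := one_sub_inv_le_log_of_pos ha0
    rwa [show 1 - a⁻¹ = (a - 1) / a by field_simp] at this
  have hlogb' : a * log b ≤ a * log a + (b - a) := by
    have := mul_le_mul_of_nonneg_left hlogb ha0.le
    rwa [mul_add, mul_div_cancel₀ _ ha0.ne'] at this
  have hloga'' : a - 1 ≤ a * log a := by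
    have := mul_le_mul_of_nonneg_left hloga' ha0.le
    rwa [mul_div_cancel₀ _ ha0.ne'] at this
  -- `log b ≤ log a + (b − a)/a` reduces the claim to `a − 1 ≤ (a + b − 1) log a`.
  have key : a * ((a ^ 2 - a) * log b) ≤ a * ((b ^ 2 - b) * log a) := by
    nlinarith [mul_le_mul_of_nonneg_left hlogb' (by linarith : (0 : ℝ) ≤ a - 1),
      mul_le_mul_of_nonneg_left hloga'' (by nlinarith : (0 : ℝ) ≤ (b - a) * (a + b - 1)),
      mul_nonneg (mul_nonneg (by linarith : (0 : ℝ) ≤ a - 1) (by linarith : (0 : ℝ) ≤ b - a))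
        (by linarith : (0 : ℝ) ≤ b - 1)]
  exact le_of_mul_le_mul_left key ha0

theorem small_benefit_middle_primes_exponent_le_two_general (ρ x₁ x₂ : ℝ)
    (hx₂1 : 1 < x₂) (hx₂ : (x₂ ^ 2 - x₂) / Real.log x₂ = ρ)
    (N : ℕ)
    (hNfac : ∀ p : ℕ, p.Prime →
      (1 ≤ N.factorization p ↔ (p : ℝ) / Real.log p < ρ) ∧
      (∀ i : ℕ, 2 ≤ i →
        (i ≤ N.factorization p ↔
          ((p : ℝ) ^ i - (p : ℝ) ^ (i - 1)) / Real.log p < ρ)))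
    (M : ℕ)
    (hben : ben ρ N M < min (x₂ ^ 2 - 2 * x₂) (x₁ / 2 - Real.sqrt x₁)) :
    ∀ p : ℕ, p.Prime → x₂ ≤ (p : ℝ) → (p : ℝ) < Real.sqrt x₁ →
      M.factorization p ≤ 2 := by
  intro q hq hx₂q _
  by_contra! hv
  have hq2 : (2 : ℝ) ≤ q := by exact_mod_cast hq.two_le
  have hlogq : 0 < log q := log_pos (by linarith)
  have hρ0 : 0 ≤ ρ := hx₂ ▸ div_nonneg (by nlinarith) (log_pos hx₂1).le
  have hρq : ρ * log q ≤ (q : ℝ) ^ 2 - q :=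
    (le_div_iff₀ hlogq).mp (hx₂ ▸ sq_sub_self_div_log_le hx₂1 hx₂q)
  have hNq : N.factorization q ≤ 1 := by
    by_contra! h
    have := ((hNfac q hq).2 2 le_rfl).mp h
    rw [div_lt_iff₀ hlogq] at this
    norm_num at this
    linarith
  have hcostM : localCost ρ q 3 ≤ localCost ρ q (M.factorization q) :=
    monotoneOn_nat_Ici_of_le_succ (f := localCost ρ q) (k := 1)
      (fun _ hw => localCost_le_localCost_succ hq.one_le hρq hw) (by simp) (by simp; omega) hv
  have hlocal := localCost_sub_le_ben
    (fun p hp => localCost_le_of_factorization_iff hp (hNfac p hp).1 (hNfac p hp).2) M hq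
  have hcube : x₂ ^ 2 - 2 * x₂ ≤ (q : ℝ) * (q - 1) * (q - 2) := by
    nlinarith [mul_nonneg (by linarith : (0 : ℝ) ≤ q - x₂) (by linarith : (0 : ℝ) ≤ q + x₂ - 2),
      mul_nonneg (mul_nonneg (by linarith : (0 : ℝ) ≤ q) (by linarith : (0 : ℝ) ≤ q - 2))
        (by linarith : (0 : ℝ) ≤ q - 2)]
  have hcost3 : localCost ρ q 3 = (q : ℝ) ^ 3 - 3 * (ρ * log q) := by
    simp only [localCost, if_neg three_ne_zero]
    push_cast
    ring
  linarith [localCost_le_self hρ0 q hNq, min_le_left (x₂ ^ 2 - 2 * x₂) (x₁ / 2 - Real.sqrt x₁)]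

theorem small_benefit_middle_primes_exponent_le_two (ρ x₁ x₂ : ℝ)
    (hρ : 5 / Real.log 5 ≤ ρ)
    (hx₁e : Real.exp 1 ≤ x₁) (hx₁ : x₁ / Real.log x₁ = ρ)
    (hx₂1 : 1 < x₂) (hx₂ : (x₂ ^ 2 - x₂) / Real.log x₂ = ρ)
    (N : ℕ) (hN : 0 < N)
    (hNfac : ∀ p : ℕ, p.Prime →
      (1 ≤ N.factorization p ↔ (p : ℝ) / Real.log p < ρ) ∧
      (∀ i : ℕ, 2 ≤ i →
        (i ≤ N.factorization p ↔
          ((p : ℝ) ^ i - (p : ℝ) ^ (i - 1)) / Real.log p < ρ)))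
    (M : ℕ) (hM : 0 < M)
    (hben : ben ρ N M < min (x₂ ^ 2 - 2 * x₂) (x₁ / 2 - Real.sqrt x₁)) :
    ∀ p : ℕ, p.Prime → x₂ ≤ (p : ℝ) → (p : ℝ) < Real.sqrt x₁ →
      M.factorization p ≤ 2 :=
  small_benefit_middle_primes_exponent_le_two_general ρ x₁ x₂ hx₂1 hx₂ N hNfac M hben
end
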